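/- Let F be a Borel probability measure on the set of valuation profiles { v = (v_1,...,v_m) : v_i ∈ [0,1]^n, ∑_j v_{ij} ≤ 1 } with a density (with respect to Lebesgue measure) bounded above by X > 0, and let Y ≥ max{1, X}. For an AMA menu M = {(x^(k), β^(k))}_{k∈{0,...,K}}, define the softmax weights σ_k(v) = e^{Y W_k(v)} / ∑_{k'} e^{Y W_{k'}(v)} and, for each buyer i, σ_{-i,k}(v) = e^{Y(∑_{ℓ≠i} v_ℓ⋅x_ℓ^(k) + β^(k))} / ∑_{k'} e^{Y(∑_{ℓ≠i} v_ℓ⋅x_ℓ^(k') + β^(k'))}, and the softmax revenue Rev_softmax(M) := ∫ [ ∑_i ∑_k (∑_{ℓ≠i} v_ℓ⋅x_ℓ^(k) + β^(k)) σ_{-i,k}(v) − ∑_i ∑_k (∑_{ℓ≠i} v_ℓ⋅x_ℓ^(k) + β^(k)) σ_k(v) ] dF(v). Then |Rev_softmax(M) − Rev(M)| ≤ m(K+1)/(e·Y) + (n m X (K+1)/Y) · (1 + log(Y/X)). -/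

import Mathlib

/-!
Pointwise, the softmax integrand minus the payment equals `m` times the softmax regret of the
boosted welfares, minus the regrets with each buyer left out, minus the welfare shortfall of the
softmax choice. Each regret lies in `[0, K / (e Y)]` because `t e^{-Y t} ≤ 1 / (e Y)`.

The shortfall is at most `n K / (K + 1)`, since the maximizer has softmax weight at least
`1 / (K + 1)`; this is enough when `Y ≤ e X`. When `Y ≥ e X`, bound it instead by terms
`|x^{k'}_{ij} - x^k_{ij}| e^{-Y (W - W_k)}`, with `k'` a maximizer. If only `v_{ij}` moves, every
boosted welfare is affine, so each such term integrates to at most `2 / Y`. Integrating over the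
other coordinates and using the density bound `X` gives `2 n m (K + 1) X / Y`, and here
`2 ≤ 1 + log (Y / X)`.
-/

open MeasureTheory Finset

namespace AMA

/-- An AMA menu: for each of the `K+1` option indices, an allocation
`x : Fin m → Fin n → ℝ` (buyer `i` receives `x i j` of item `j`) and a boost `β : ℝ`. -/
abbrev Menu (m n K : ℕ) := Fin (K + 1) → (Fin m → Fin n → ℝ) × ℝ

/-- Inner product of a valuation and an allocation. -/
def dotp {n : ℕ} (v x : Fin n → ℝ) : ℝ := ∑ j, v j * x j

/-- A valid AMA menu: entries in `[0,1]`, each item allocated at most once in total,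
default option `(0, 0)`. -/
def IsMenu {m n K : ℕ} (M : Menu m n K) : Prop :=
  (∀ k i j, 0 ≤ (M k).1 i j ∧ (M k).1 i j ≤ 1) ∧
  (∀ k j, ∑ i, (M k).1 i j ≤ 1) ∧ M 0 = 0

/-- The set of valuation profiles: each buyer's valuation lies in `[0,1]^n` with
coordinate sum at most `1`. -/
def VP (m n : ℕ) : Set (Fin m → Fin n → ℝ) :=
  {v | ∀ i, (∀ j, 0 ≤ v i j ∧ v i j ≤ 1) ∧ ∑ j, v i j ≤ 1}

/-- Boosted welfare of option `k` at the valuation profile `v`. -/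
def bw {m n K : ℕ} (M : Menu m n K) (v : Fin m → Fin n → ℝ) (k : Fin (K + 1)) : ℝ :=
  (∑ i, dotp (v i) ((M k).1 i)) + (M k).2

/-- Boosted welfare of option `k` at `v` when buyer `i` is omitted. -/
def bwWo {m n K : ℕ} (M : Menu m n K) (v : Fin m → Fin n → ℝ) (i : Fin m)
    (k : Fin (K + 1)) : ℝ :=
  (∑ l ∈ Finset.univ.erase i, dotp (v l) ((M k).1 l)) + (M k).2

/-- Maximal boosted welfare `W(v)`. -/
noncomputable def W {m n K : ℕ} (M : Menu m n K) (v : Fin m → Fin n → ℝ) : ℝ :=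
  Finset.univ.sup' Finset.univ_nonempty (bw M v)

/-- Maximal boosted welfare `W(v₋ᵢ)` with buyer `i` omitted. -/
noncomputable def WWo {m n K : ℕ} (M : Menu m n K) (v : Fin m → Fin n → ℝ)
    (i : Fin m) : ℝ :=
  Finset.univ.sup' Finset.univ_nonempty (bwWo M v i)

/-- The minimal boost among boosted-welfare-maximizing options (tie-breaking in favor
of maximal total payment). -/
noncomputable def minBeta {m n K : ℕ} (M : Menu m n K) (v : Fin m → Fin n → ℝ) : ℝ :=
  sInf {b : ℝ | ∃ k, bw M v k = W M v ∧ b = (M k).2}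

/-- Total payment collected at `v`:
`∑ i W(v₋ᵢ) − (m−1) W(v) − min {β k : W_k(v) = W(v)}`. -/
noncomputable def pay {m n K : ℕ} (M : Menu m n K) (v : Fin m → Fin n → ℝ) : ℝ :=
  (∑ i, WWo M v i) - ((m : ℝ) - 1) * W M v - minBeta M v

/-- Expected revenue of the AMA menu `M` under the profile distribution `F`. -/
noncomputable def Rev {m n K : ℕ} (F : Measure (Fin m → Fin n → ℝ))
    (M : Menu m n K) : ℝ :=
  ∫ v, pay M v ∂F

/-- Option-wise convex combination of two AMA menus. -/
noncomputable def comb {m n K : ℕ} (lam : ℝ) (M M' : Menu m n K) : Menu m n K :=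
  fun k => (fun i j => lam * (M k).1 i j + (1 - lam) * (M' k).1 i j,
            lam * (M k).2 + (1 - lam) * (M' k).2)

/-- The event that the option subset `K'` suffices at `v`: some boosted-welfare
maximizer with minimal boost lies in `K'`, and for every buyer `i` some maximizer of the
boosted welfare of `v₋ᵢ` lies in `K'`. -/
def GoodEvent {m n K : ℕ} (M : Menu m n K) (K' : Finset (Fin (K + 1)))
    (v : Fin m → Fin n → ℝ) : Prop :=
  (∃ k ∈ K', bw M v k = W M v ∧ (M k).2 = minBeta M v) ∧
  ∀ i : Fin m, ∃ k ∈ K', bwWo M v i k = WWo M v i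

/-- `M` is `ε`-reducible: some subset `K'` of options containing the default option, of
cardinality at most `√(K+1)`, whose good event has probability at least `1 - ε/m`. -/
def Reducible {m n K : ℕ} (F : Measure (Fin m → Fin n → ℝ)) (M : Menu m n K)
    (ε : ℝ) : Prop :=
  ∃ K' : Finset (Fin (K + 1)), 0 ∈ K' ∧ (K'.card : ℝ) ≤ Real.sqrt (K + 1) ∧
    (F {v | GoodEvent M K' v}).toReal ≥ 1 - ε / (m : ℝ)

/-- `M₁` and `M₂` are `ε`-mode-connected by a piecewise linear path with `pieces`
linear pieces, all whose menus are valid AMA menus and have revenue at least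
`min (Rev M₁) (Rev M₂) - ε`. -/
def PLConnected {m n K : ℕ} (F : Measure (Fin m → Fin n → ℝ)) (M₁ M₂ : Menu m n K)
    (ε : ℝ) (pieces : ℕ) : Prop :=
  ∃ P : Fin (pieces + 1) → Menu m n K, P 0 = M₁ ∧ P (Fin.last pieces) = M₂ ∧
    (∀ i, IsMenu (P i)) ∧
    ∀ i : Fin pieces, ∀ lam ∈ Set.Icc (0 : ℝ) 1,
      Rev F (comb lam (P i.castSucc) (P i.succ)) ≥ min (Rev F M₁) (Rev F M₂) - ε

/-- Softmax revenue of an AMA menu with inverse-temperature parameter `Y`: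
`∫ [ ∑ i ∑ k bwWo(i,k) σ₋ᵢ,ₖ(v) − ∑ i ∑ k bwWo(i,k) σₖ(v) ] dF(v)`, where the weights
`σₖ` (resp. `σ₋ᵢ,ₖ`) are the softmax weights of the boosted welfares `bw` (resp. the
boosted welfares `bwWo` with buyer `i` omitted). -/
noncomputable def RevSoftmax {m n K : ℕ} (F : Measure (Fin m → Fin n → ℝ)) (Y : ℝ)
    (M : Menu m n K) : ℝ :=
  ∫ v,
    ((∑ i, ∑ k, bwWo M v i k * Real.exp (Y * bwWo M v i k) /
        (∑ k', Real.exp (Y * bwWo M v i k'))) -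
      (∑ i : Fin m, ∑ k, bwWo M v i k * Real.exp (Y * bw M v k) /
        (∑ k', Real.exp (Y * bw M v k')))) ∂F

end AMA

open scoped ENNReal

section Softmax

variable {ι : Type*} [Fintype ι]

noncomputable def softmax (Y : ℝ) (c : ι → ℝ) (k : ι) : ℝ :=
  Real.exp (Y * c k) / ∑ k', Real.exp (Y * c k')

lemma softmax_nonneg (Y : ℝ) (c : ι → ℝ) (k : ι) : 0 ≤ softmax Y c k := by
  unfold softmax; positivity

variable [Nonempty ι]

lemma sum_exp_pos (Y : ℝ) (c : ι → ℝ) : 0 < ∑ k, Real.exp (Y * c k) :=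
  Finset.sum_pos (fun _ _ => Real.exp_pos _) univ_nonempty

lemma sum_softmax (Y : ℝ) (c : ι → ℝ) : ∑ k, softmax Y c k = 1 := by
  simp only [softmax, ← Finset.sum_div, div_self (sum_exp_pos Y c).ne']

lemma softmax_le_exp_neg (Y : ℝ) (c : ι → ℝ) (k : ι) :
    softmax Y c k ≤ Real.exp (-(Y * (univ.sup' univ_nonempty c - c k))) := by
  obtain ⟨k₀, -, hk₀⟩ := exists_mem_eq_sup' univ_nonempty c
  calc softmax Y c k ≤ Real.exp (Y * c k) / Real.exp (Y * c k₀) :=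
        div_le_div_of_nonneg_left (Real.exp_pos _).le (Real.exp_pos _)
          (single_le_sum (f := fun k => Real.exp (Y * c k)) (fun _ _ => (Real.exp_pos _).le)
            (mem_univ k₀))
    _ = _ := by rw [hk₀, ← Real.exp_sub]; ring_nf

lemma inv_card_le_softmax {Y : ℝ} (hY : 0 ≤ Y) {c : ι → ℝ} {k₀ : ι} (h : ∀ k, c k ≤ c k₀) :
    (Fintype.card ι : ℝ)⁻¹ ≤ softmax Y c k₀ := by
  have hsum : ∑ k, Real.exp (Y * c k) ≤ Fintype.card ι * Real.exp (Y * c k₀) := by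
    simpa using sum_le_sum fun k (_ : k ∈ univ) =>
      Real.exp_le_exp.2 (mul_le_mul_of_nonneg_left (h k) hY)
  rw [softmax, inv_le_iff_one_le_mul₀ (by exact_mod_cast Fintype.card_pos), div_mul_eq_mul_div,
    le_div_iff₀ (sum_exp_pos Y c), one_mul]
  linarith

noncomputable def softmaxRegret (Y : ℝ) (c : ι → ℝ) : ℝ :=
  ∑ k, (univ.sup' univ_nonempty c - c k) * softmax Y c k

lemma softmaxRegret_nonneg (Y : ℝ) (c : ι → ℝ) : 0 ≤ softmaxRegret Y c :=
  sum_nonneg fun k _ =>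
    mul_nonneg (sub_nonneg.2 (le_sup' c (mem_univ k))) (softmax_nonneg Y c k)

lemma sum_mul_softmax (Y : ℝ) (c : ι → ℝ) :
    ∑ k, c k * softmax Y c k = univ.sup' univ_nonempty c - softmaxRegret Y c := by
  simp only [softmaxRegret, sub_mul, sum_sub_distrib, ← mul_sum, sum_softmax, mul_one]
  ring

lemma softmaxRegret_le {Y : ℝ} (hY : 0 < Y) (c : ι → ℝ) :
    softmaxRegret Y c ≤ (Fintype.card ι - 1) / (Real.exp 1 * Y) := by
  classical
  obtain ⟨k₀, -, hk₀⟩ := exists_mem_eq_sup' univ_nonempty c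
  have hterm : ∀ k, (univ.sup' univ_nonempty c - c k) * softmax Y c k ≤ 1 / (Real.exp 1 * Y) := by
    intro k
    have h := Real.mul_exp_neg_le_exp_neg_one (Y * (univ.sup' univ_nonempty c - c k))
    rw [Real.exp_neg 1, mul_assoc] at h
    calc _ ≤ (univ.sup' univ_nonempty c - c k) *
          Real.exp (-(Y * (univ.sup' univ_nonempty c - c k))) :=
          mul_le_mul_of_nonneg_left (softmax_le_exp_neg Y c k)
            (sub_nonneg.2 (le_sup' c (mem_univ k)))
      _ ≤ 1 / (Real.exp 1 * Y) := by
          rw [div_mul_eq_div_div, le_div_iff₀ hY, one_div]; linarith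
  rw [softmaxRegret, ← add_sum_erase _ _ (mem_univ k₀), hk₀, sub_self, zero_mul, zero_add]
  calc _ ≤ ∑ _k ∈ univ.erase k₀, 1 / (Real.exp 1 * Y) := sum_le_sum fun k _ => hk₀ ▸ hterm k
    _ = _ := by
      rw [sum_const, card_erase_of_mem (mem_univ _), card_univ, nsmul_eq_mul,
        Nat.cast_pred Fintype.card_pos]
      ring

end Softmax

section Variation

open Set

theorem MonotoneOn.setLIntegral_le_of_le_abs_deriv {f : ℝ → ℝ} {a b : ℝ} (hab : a ≤ b)
    (hf : MonotoneOn f (Icc a b)) {φ : ℝ → ℝ≥0∞}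
    (hφ : ∀ s ∈ Ioo a b, DifferentiableAt ℝ f s → φ s ≤ ENNReal.ofReal |deriv f s|) :
    ∫⁻ s in Icc a b, φ s ≤ ENNReal.ofReal (f b - f a) := by
  have hdiff : ∀ᵐ s, s ∈ Ioo a b → DifferentiableAt ℝ f s := by
    filter_upwards [hf.ae_differentiableWithinAt_of_mem] with s hs hsI
    exact (hs (Ioo_subset_Icc_self hsI)).differentiableAt (Icc_mem_nhds hsI.1 hsI.2)
  have hnonneg : ∀ s ∈ Ioo a b, 0 ≤ deriv f s := fun s hs => by
    rw [← derivWithin_of_mem_nhds (Icc_mem_nhds hs.1 hs.2)]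
    exact hf.derivWithin_nonneg
  have hint : IntegrableOn (deriv f) (Ioo a b) :=
    ((hf.mono (by rw [uIcc_of_le hab])).intervalIntegrable_deriv.1).mono_set Ioo_subset_Ioc_self
  calc ∫⁻ s in Icc a b, φ s = ∫⁻ s in Ioo a b, φ s := by
        rw [Measure.restrict_congr_set Ioo_ae_eq_Icc]
    _ ≤ ∫⁻ s in Ioo a b, ENNReal.ofReal (deriv f s) := by
        refine lintegral_mono_ae ((ae_restrict_iff' measurableSet_Ioo).2 ?_)
        filter_upwards [hdiff] with s hs hsI
        exact (hφ s hsI (hs hsI)).trans_eq (by rw [abs_of_nonneg (hnonneg s hsI)])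
    _ = ENNReal.ofReal (∫ s in a..b, deriv f s) := by
        rw [intervalIntegral.integral_of_le hab, integral_Ioc_eq_integral_Ioo,
          ofReal_integral_eq_lintegral_ofReal hint
            ((ae_restrict_iff' measurableSet_Ioo).2 (ae_of_all _ hnonneg))]
    _ ≤ ENNReal.ofReal (f b - f a) := by
        have h := (hf.mono (by rw [uIcc_of_le hab])).intervalIntegral_deriv_mem_uIcc
        rw [uIcc_of_le (sub_nonneg.2 (hf (left_mem_Icc.2 hab) (right_mem_Icc.2 hab) hab))] at h
        exact ENNReal.ofReal_le_ofReal h.2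

theorem AntitoneOn.setLIntegral_le_of_le_abs_deriv {f : ℝ → ℝ} {a b : ℝ} (hab : a ≤ b)
    (hf : AntitoneOn f (Icc a b)) {φ : ℝ → ℝ≥0∞}
    (hφ : ∀ s ∈ Ioo a b, DifferentiableAt ℝ f s → φ s ≤ ENNReal.ofReal |deriv f s|) :
    ∫⁻ s in Icc a b, φ s ≤ ENNReal.ofReal (f a - f b) := by
  have h := MonotoneOn.setLIntegral_le_of_le_abs_deriv hab hf.neg (φ := φ) fun s hs hd => by
    rw [show (fun x => -f x) = -f from rfl, deriv.neg, abs_neg]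
    exact hφ s hs (differentiableAt_neg_iff.1 hd)
  rwa [neg_sub_neg] at h

theorem ConvexOn.antitoneOn_monotoneOn_of_isMinOn {g : ℝ → ℝ} {a b s₀ : ℝ}
    (hg : ConvexOn ℝ (Icc a b) g) (hs₀ : s₀ ∈ Icc a b) (hmin : IsMinOn g (Icc a b) s₀) :
    AntitoneOn g (Icc a s₀) ∧ MonotoneOn g (Icc s₀ b) := by
  constructor
  · intro x hx y hy hxy
    have hxI : x ∈ Icc a b := ⟨hx.1, hx.2.trans hs₀.2⟩
    rcases hy.2.eq_or_lt with rfl | hlt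
    · exact hmin hxI
    · exact hg.le_left_of_right_le'' hxI hs₀ hxy hlt (hmin ⟨hx.1.trans hxy, hlt.le.trans hs₀.2⟩)
  · intro x hx y hy hxy
    have hyI : y ∈ Icc a b := ⟨hs₀.1.trans hy.1, hy.2⟩
    rcases hx.1.eq_or_lt with rfl | hlt
    · exact hmin hyI
    · exact hg.le_right_of_left_le'' hs₀ hyI hlt hxy (hmin ⟨hs₀.1.trans hlt.le, hxy.trans hy.2⟩)

end Variation

section Envelope

variable {ι : Type*} [Fintype ι] [Nonempty ι] (a b : ι → ℝ) (k₀ : ι)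

noncomputable def upperEnvelope (s : ℝ) : ℝ :=
  univ.sup' univ_nonempty fun k => a k * s + b k

noncomputable def envelopeWeight (Y s : ℝ) : ℝ :=
  Real.exp (-(Y * (upperEnvelope a b s - (a k₀ * s + b k₀))))

noncomputable def activeSlopeGap (s : ℝ) : ℝ :=
  univ.sup' univ_nonempty fun k => if a k * s + b k = upperEnvelope a b s then |a k - a k₀| else 0

variable {a b}

lemma le_upperEnvelope (k : ι) (s : ℝ) : a k * s + b k ≤ upperEnvelope a b s :=
  le_sup' (fun k => a k * s + b k) (mem_univ k)

lemma exists_upperEnvelope_eq (s : ℝ) : ∃ k, a k * s + b k = upperEnvelope a b s := by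
  obtain ⟨k, -, hk⟩ := exists_mem_eq_sup' univ_nonempty fun k => a k * s + b k
  exact ⟨k, hk.symm⟩

lemma continuous_upperEnvelope : Continuous (upperEnvelope a b) :=
  Continuous.finset_sup'_apply univ_nonempty fun k _ => by fun_prop

lemma convexOn_upperEnvelope : ConvexOn ℝ Set.univ (upperEnvelope a b) := by
  have h : upperEnvelope a b = univ.sup' univ_nonempty fun k s => a k * s + b k := by
    ext s; simp [upperEnvelope, Finset.sup'_apply]
  rw [h]
  refine sup'_induction _ _ (fun f hf g hg => hf.sup hg) fun k _ => ?_
  refine ⟨convex_univ, fun x _ y _ p q _ _ hpq => le_of_eq ?_⟩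
  simp only [smul_eq_mul]
  linear_combination (-b k) * hpq

lemma envelopeWeight_le_one {Y : ℝ} (hY : 0 ≤ Y) (s : ℝ) : envelopeWeight a b k₀ Y s ≤ 1 :=
  Real.exp_le_one_iff.2 (neg_nonpos.2 (mul_nonneg hY (sub_nonneg.2 (le_upperEnvelope k₀ s))))

lemma deriv_envelopeWeight {Y s : ℝ} (hY : 0 ≤ Y) {k : ι} (hk : a k * s + b k = upperEnvelope a b s)
    (hd : DifferentiableAt ℝ (envelopeWeight a b k₀ Y) s) :
    deriv (envelopeWeight a b k₀ Y) s = -(Y * (a k - a k₀)) * envelopeWeight a b k₀ Y s := by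
  set u := envelopeWeight a b k₀ Y
  set E : ℝ → ℝ := fun t => Real.exp (Y * ((a k - a k₀) * t + (b k - b k₀)))
  have hE : HasDerivAt E (E s * (Y * (a k - a k₀))) s := by
    have := (((hasDerivAt_id s).const_mul (a k - a k₀)).add_const (b k - b k₀)).const_mul Y
    simpa using this.exp
  -- `u · E = exp (-Y (envelope - line k)) ≤ 1`, with equality at the active point `s`
  have hmax : IsLocalMax (fun t => u t * E t) s := by
    refine Filter.Eventually.of_forall fun t => ?_
    simp only [u, E, envelopeWeight, ← Real.exp_add]
    refine Real.exp_le_exp.2 ?_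
    rw [← hk]
    nlinarith [mul_nonneg hY (sub_nonneg.2 (le_upperEnvelope (a := a) (b := b) k t))]
  have h0 := hmax.hasDerivAt_eq_zero (hd.hasDerivAt.mul hE)
  have hprod : (deriv u s + Y * (a k - a k₀) * u s) * E s = 0 := by linear_combination h0
  rcases mul_eq_zero.1 hprod with h | h
  · linarith
  · exact absurd h (Real.exp_pos _).ne'

lemma mul_activeSlopeGap_mul_envelopeWeight_eq_abs_deriv {Y s : ℝ} (hY : 0 < Y)
    (hd : DifferentiableAt ℝ (envelopeWeight a b k₀ Y) s) :
    Y * (activeSlopeGap a b k₀ s * envelopeWeight a b k₀ Y s) =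
      |deriv (envelopeWeight a b k₀ Y) s| := by
  set u := envelopeWeight a b k₀ Y
  have hu : 0 < u s := Real.exp_pos _
  have hactive : ∀ k, a k * s + b k = upperEnvelope a b s →
      |a k - a k₀| = |deriv u s| / (Y * u s) := fun k hk => by
    rw [deriv_envelopeWeight k₀ hY.le hk hd, abs_mul, abs_neg, abs_mul, abs_of_pos hY,
      abs_of_pos hu]
    field_simp
  obtain ⟨k, hk⟩ := exists_upperEnvelope_eq (a := a) (b := b) s
  have hgap : activeSlopeGap a b k₀ s = |deriv u s| / (Y * u s) := by
    refine le_antisymm (sup'_le _ _ fun k' _ => ?_) ?_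
    · split_ifs with h
      exacts [(hactive k' h).le, by positivity]
    · exact (hactive k hk).symm.le.trans (le_sup'_of_le _ (mem_univ k) (by rw [if_pos hk]))
  rw [hgap]
  field_simp

lemma exists_monotoneOn_antitoneOn_envelopeWeight {Y p q : ℝ} (hY : 0 ≤ Y) (hpq : p ≤ q) :
    ∃ s₀ ∈ Set.Icc p q, MonotoneOn (envelopeWeight a b k₀ Y) (Set.Icc p s₀) ∧
      AntitoneOn (envelopeWeight a b k₀ Y) (Set.Icc s₀ q) := by
  have hline : ConcaveOn ℝ Set.univ fun s => a k₀ * s + b k₀ :=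
    ⟨convex_univ, fun x _ y _ p q _ _ hpq => le_of_eq (by
      simp only [smul_eq_mul]; linear_combination b k₀ * hpq)⟩
  have hgap : ConvexOn ℝ (Set.Icc p q) fun s => upperEnvelope a b s - (a k₀ * s + b k₀) :=
    (convexOn_upperEnvelope.sub hline).subset (Set.subset_univ _) (convex_Icc p q)
  have hcont : Continuous fun s => upperEnvelope a b s - (a k₀ * s + b k₀) :=
    continuous_upperEnvelope.sub (by fun_prop)
  obtain ⟨s₀, hs₀, hmin⟩ :=
    isCompact_Icc.exists_isMinOn (Set.nonempty_Icc.2 hpq) hcont.continuousOn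
  obtain ⟨hanti, hmono⟩ := hgap.antitoneOn_monotoneOn_of_isMinOn hs₀ hmin
  exact ⟨s₀, hs₀,
    fun x hx y hy hxy => Real.exp_le_exp.2 (neg_le_neg (mul_le_mul_of_nonneg_left
      (hanti hx hy hxy) hY)),
    fun x hx y hy hxy => Real.exp_le_exp.2 (neg_le_neg (mul_le_mul_of_nonneg_left
      (hmono hx hy hxy) hY))⟩

/-- The weight is unimodal with values in `(0, 1]`, and `Y` times the integrand is the absolute
derivative of the weight, so the integral is at most `2 / Y`. -/
lemma setLIntegral_activeSlopeGap_mul_envelopeWeight_le {Y p q : ℝ} (hY : 0 < Y) (hpq : p ≤ q) :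
    ∫⁻ s in Set.Icc p q, ENNReal.ofReal (activeSlopeGap a b k₀ s * envelopeWeight a b k₀ Y s)
      ≤ ENNReal.ofReal (2 / Y) := by
  set u := envelopeWeight a b k₀ Y
  obtain ⟨s₀, hs₀, hu_mono, hu_anti⟩ := exists_monotoneOn_antitoneOn_envelopeWeight k₀ hY.le hpq
  have hφ : ∀ s, DifferentiableAt ℝ u s →
      ENNReal.ofReal (Y * (activeSlopeGap a b k₀ s * u s)) ≤ ENNReal.ofReal |deriv u s| :=
    fun s hd => (congrArg ENNReal.ofReal
      (mul_activeSlopeGap_mul_envelopeWeight_eq_abs_deriv k₀ hY hd)).le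
  have hsplit : ∫⁻ s in Set.Icc p q, ENNReal.ofReal (Y * (activeSlopeGap a b k₀ s * u s)) ≤
      ENNReal.ofReal (u s₀ - u p) + ENNReal.ofReal (u s₀ - u q) := by
    rw [← Set.Icc_union_Icc_eq_Icc hs₀.1 hs₀.2]
    exact (lintegral_union_le _ _ _).trans (add_le_add
      (hu_mono.setLIntegral_le_of_le_abs_deriv hs₀.1 fun s _ => hφ s)
      (hu_anti.setLIntegral_le_of_le_abs_deriv hs₀.2 fun s _ => hφ s))
  have hup : 0 < u p := Real.exp_pos _
  have huq : 0 < u q := Real.exp_pos _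
  have hus₀ : u s₀ ≤ 1 := envelopeWeight_le_one k₀ hY.le s₀
  have hups₀ : u p ≤ u s₀ :=
    hu_mono (Set.left_mem_Icc.2 hs₀.1) (Set.right_mem_Icc.2 hs₀.1) hs₀.1
  have huqs₀ : u q ≤ u s₀ :=
    hu_anti (Set.left_mem_Icc.2 hs₀.2) (Set.right_mem_Icc.2 hs₀.2) hs₀.2
  calc ∫⁻ s in Set.Icc p q, ENNReal.ofReal (activeSlopeGap a b k₀ s * u s)
      = ENNReal.ofReal Y⁻¹ *
          ∫⁻ s in Set.Icc p q, ENNReal.ofReal (Y * (activeSlopeGap a b k₀ s * u s)) := by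
        rw [← lintegral_const_mul' _ _ ENNReal.ofReal_ne_top]
        refine lintegral_congr fun s => ?_
        rw [← ENNReal.ofReal_mul (inv_nonneg.2 hY.le), inv_mul_cancel_left₀ hY.ne']
    _ ≤ ENNReal.ofReal Y⁻¹ * (ENNReal.ofReal (u s₀ - u p) + ENNReal.ofReal (u s₀ - u q)) := by
        gcongr
    _ ≤ ENNReal.ofReal Y⁻¹ * ENNReal.ofReal 2 := by
        rw [← ENNReal.ofReal_add (by linarith) (by linarith)]
        gcongr
        linarith
    _ = ENNReal.ofReal (2 / Y) := by
        rw [← ENNReal.ofReal_mul (inv_nonneg.2 hY.le), inv_mul_eq_div]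

end Envelope

section PiSlice

variable {ι : Type*} [Fintype ι] [DecidableEq ι] {α : ι → Type*} [∀ i, MeasurableSpace (α i)]
  {μ : ∀ i, Measure (α i)} [∀ i, SigmaFinite (μ i)]

theorem lintegral_pi_le_of_lintegral_update_le {S : ∀ i, Set (α i)}
    (hS : ∀ i, MeasurableSet (S i)) (hμS : ∀ i, μ i (S i) = 1) {f : (∀ i, α i) → ℝ≥0∞}
    (hf : Measurable f) (hfS : Function.support f ⊆ Set.univ.pi S) (i₀ : ι) {C : ℝ≥0∞}
    (hC : ∀ x, ∫⁻ t, f (Function.update x i₀ t) ∂μ i₀ ≤ C) :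
    ∫⁻ x, f x ∂Measure.pi μ ≤ C := by
  have hT : MeasurableSet (Set.univ.pi S) := MeasurableSet.univ_pi hS
  calc ∫⁻ x, f x ∂Measure.pi μ ≤ ∫⁻ x, (Set.univ.pi S).indicator (fun _ => C) x ∂Measure.pi μ := by
        refine lintegral_le_of_lmarginal_le {i₀} hf (measurable_const.indicator hT) fun x => ?_
        simp only [lmarginal_singleton]
        by_cases hx : ∀ i ≠ i₀, x i ∈ S i
        · have hmem : ∀ t, Function.update x i₀ t ∈ Set.univ.pi S ↔ t ∈ S i₀ := fun t => by
            refine ⟨fun h => by simpa using Set.mem_univ_pi.1 h i₀, fun ht => ?_⟩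
            refine Set.mem_univ_pi.2 fun i => ?_
            rcases eq_or_ne i i₀ with rfl | hi
            · simpa using ht
            · simpa [Function.update_of_ne hi] using hx i hi
          have hslice : ∀ t, (Set.univ.pi S).indicator (fun _ => C) (Function.update x i₀ t) =
              (S i₀).indicator (fun _ => C) t := fun t => by
            by_cases ht : t ∈ S i₀
            · rw [Set.indicator_of_mem ((hmem t).2 ht), Set.indicator_of_mem ht]
            · rw [Set.indicator_of_notMem (mt (hmem t).1 ht), Set.indicator_of_notMem ht]
          rw [lintegral_congr hslice, lintegral_indicator_const (hS i₀), hμS, mul_one]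
          exact hC x
        · obtain ⟨i, hi, hxi⟩ : ∃ i ≠ i₀, x i ∉ S i := by simpa using hx
          have hzero : ∀ t, f (Function.update x i₀ t) = 0 := fun t =>
            Function.notMem_support.1 fun h => hxi (by
              simpa [Function.update_of_ne hi] using Set.mem_univ_pi.1 (hfS h) i)
          simp [hzero]
    _ = C := by
        rw [lintegral_indicator_const hT, Measure.pi_pi, prod_eq_one fun i _ => hμS i, mul_one]

end PiSlice

section FinsetSup

variable {δ ι : Type*} [MeasurableSpace δ] {s : Finset ι} (hs : s.Nonempty) {f : ι → δ → ℝ}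

include hs in
lemma measurable_finset_sup' (hf : ∀ i ∈ s, Measurable (f i)) :
    Measurable fun x => s.sup' hs fun i => f i x := by
  simpa only [← Finset.sup'_apply] using Finset.measurable_sup' hs hf

include hs in
lemma measurable_finset_inf' (hf : ∀ i ∈ s, Measurable (f i)) :
    Measurable fun x => s.inf' hs fun i => f i x := by
  simpa only [← Finset.inf'_apply] using
    Finset.inf'_induction hs f (p := Measurable) (fun _ hf _ hg => hf.inf hg) hf

end FinsetSup

lemma lintegral_withDensity_ofReal_le {α : Type*} [MeasurableSpace α] {μ : Measure α}
    {f : α → ℝ} {X : ℝ} (hfX : ∀ x, f x ≤ X) (g : α → ℝ≥0∞) :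
    ∫⁻ x, g x ∂μ.withDensity (fun x => ENNReal.ofReal (f x)) ≤
      ENNReal.ofReal X * ∫⁻ x, g x ∂μ := by
  rw [← smul_eq_mul, ← lintegral_smul_measure, ← withDensity_const]
  exact lintegral_mono' (withDensity_mono (ae_of_all _ fun x => ENNReal.ofReal_le_ofReal (hfX x)))
    le_rfl

lemma sum_apply_update {ι β γ : Type*} [Fintype ι] [DecidableEq ι] [AddCommGroup γ]
    (φ : ι → β → γ) (x : ι → β) (i : ι) (b : β) :
    ∑ l, φ l (Function.update x i b l) = ∑ l, φ l (x l) + (φ i b - φ i (x i)) := by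
  rw [← add_sum_erase _ _ (mem_univ i), ← add_sum_erase _ _ (mem_univ i), Function.update_self,
    sum_congr rfl fun l hl => by rw [Function.update_of_ne (ne_of_mem_erase hl)]]
  abel

lemma min_le_mul_one_add_log {X Y k a b : ℝ} (hX : 0 < X) (hXY : X ≤ Y) (hk : 0 ≤ k)
    (ha : 1 ≤ a) (hb : 0 ≤ b) :
    min (b * k / (k + 1)) ((k + 1) * a * b * (X * (2 / Y))) ≤
      (b * a * X * (k + 1) / Y) * (1 + Real.log (Y / X)) := by
  have hY : 0 < Y := hX.trans_le hXY
  have hlog : 0 ≤ Real.log (Y / X) := Real.log_nonneg ((one_le_div hX).2 hXY)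
  have hc : 0 ≤ b * a * X * (k + 1) / Y := by positivity
  rcases le_total Y (Real.exp 1 * X) with hYe | hYe
  · -- `k Y ≤ k e X ≤ 4 k X ≤ (k + 1)² X`
    refine (min_le_left _ _).trans (le_trans ?_ (le_mul_of_one_le_right hc (by linarith)))
    rw [div_le_div_iff₀ (by positivity) hY]
    have he : Real.exp 1 ≤ 4 := by linarith [Real.exp_one_lt_d9]
    have hkY : k * Y ≤ (k + 1) ^ 2 * X := by
      nlinarith [mul_le_mul_of_nonneg_left hYe hk, mul_le_mul_of_nonneg_right he
        (mul_nonneg hk hX.le), mul_nonneg (sq_nonneg (k - 1)) hX.le]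
    nlinarith [mul_le_mul_of_nonneg_left hkY hb, mul_nonneg (mul_nonneg hb (sq_nonneg (k + 1)))
      (mul_nonneg hX.le (sub_nonneg.2 ha))]
  · have hlog1 : 1 ≤ Real.log (Y / X) := by
      rw [Real.le_log_iff_exp_le (by positivity), le_div_iff₀ hX]
      exact hYe
    refine (min_le_right _ _).trans (le_of_eq_of_le ?_ (mul_le_mul_of_nonneg_left
      (by linarith : (2 : ℝ) ≤ 1 + Real.log (Y / X)) hc))
    ring

namespace AMA

section Decomposition

variable {m n K : ℕ}

def welfare (M : Menu m n K) (v : Fin m → Fin n → ℝ) (k : Fin (K + 1)) : ℝ :=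
  ∑ i, dotp (v i) ((M k).1 i)

noncomputable def softmaxPay (M : Menu m n K) (Y : ℝ) (v : Fin m → Fin n → ℝ) : ℝ :=
  (∑ i, ∑ k, bwWo M v i k * Real.exp (Y * bwWo M v i k) /
      (∑ k', Real.exp (Y * bwWo M v i k'))) -
    (∑ i : Fin m, ∑ k, bwWo M v i k * Real.exp (Y * bw M v k) /
      (∑ k', Real.exp (Y * bw M v k')))

/-- `W - minBeta` is the welfare, without boost, of the option the mechanism picks. -/
noncomputable def welfareShortfall (M : Menu m n K) (Y : ℝ) (v : Fin m → Fin n → ℝ) : ℝ :=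
  W M v - minBeta M v - ∑ k, welfare M v k * softmax Y (bw M v) k

lemma bwWo_eq (M : Menu m n K) (v : Fin m → Fin n → ℝ) (i : Fin m) (k : Fin (K + 1)) :
    bwWo M v i k = bw M v k - dotp (v i) ((M k).1 i) := by
  rw [bwWo, bw, sum_erase_eq_sub (mem_univ i)]
  ring

lemma sum_bwWo (M : Menu m n K) (v : Fin m → Fin n → ℝ) (k : Fin (K + 1)) :
    ∑ i, bwWo M v i k = m * bw M v k - welfare M v k := by
  simp only [bwWo_eq, sum_sub_distrib, sum_const, card_univ, Fintype.card_fin, nsmul_eq_mul]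
  rfl

lemma softmaxPay_sub_pay (M : Menu m n K) (Y : ℝ) (v : Fin m → Fin n → ℝ) :
    softmaxPay M Y v - pay M v = m * softmaxRegret Y (bw M v) -
      ∑ i, softmaxRegret Y (bwWo M v i) - welfareShortfall M Y v := by
  have hown : ∀ i, ∑ k, bwWo M v i k * Real.exp (Y * bwWo M v i k) /
      (∑ k', Real.exp (Y * bwWo M v i k')) = WWo M v i - softmaxRegret Y (bwWo M v i) :=
    fun i => by simp only [mul_div_assoc]; exact sum_mul_softmax Y (bwWo M v i)
  have hall : ∑ i : Fin m, ∑ k, bwWo M v i k * Real.exp (Y * bw M v k) /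
      (∑ k', Real.exp (Y * bw M v k')) =
      m * (W M v - softmaxRegret Y (bw M v)) - ∑ k, welfare M v k * softmax Y (bw M v) k := by
    rw [sum_comm]
    simp only [mul_div_assoc, ← sum_mul, sum_bwWo, sub_mul, sum_sub_distrib, mul_assoc, ← mul_sum]
    exact congrArg₂ (fun a b => (m : ℝ) * a - b) (sum_mul_softmax Y (bw M v)) rfl
  rw [softmaxPay, pay, welfareShortfall, sum_congr rfl fun i _ => hown i, hall, sum_sub_distrib]
  ring

end Decomposition

section Shortfall

variable {m n K : ℕ}

lemma finite_minBeta_set (M : Menu m n K) (v : Fin m → Fin n → ℝ) :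
    {b : ℝ | ∃ k, bw M v k = W M v ∧ b = (M k).2}.Finite :=
  (Set.finite_range fun k => (M k).2).subset (by rintro b ⟨k, -, rfl⟩; exact ⟨k, rfl⟩)

lemma exists_bw_eq_W_and_eq_minBeta (M : Menu m n K) (v : Fin m → Fin n → ℝ) :
    ∃ k, bw M v k = W M v ∧ (M k).2 = minBeta M v := by
  obtain ⟨k₀, -, hk₀⟩ := exists_mem_eq_sup' univ_nonempty (bw M v)
  obtain ⟨k, hk, hb⟩ : minBeta M v ∈ {b : ℝ | ∃ k, bw M v k = W M v ∧ b = (M k).2} :=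
    Set.Nonempty.csInf_mem ⟨_, k₀, hk₀.symm, rfl⟩ (finite_minBeta_set M v)
  exact ⟨k, hk, hb.symm⟩

lemma minBeta_le {M : Menu m n K} {v : Fin m → Fin n → ℝ} {k : Fin (K + 1)}
    (hk : bw M v k = W M v) : minBeta M v ≤ (M k).2 :=
  csInf_le (finite_minBeta_set M v).bddBelow ⟨k, hk, rfl⟩

lemma welfareShortfall_eq {M : Menu m n K} {v : Fin m → Fin n → ℝ} {k₀ : Fin (K + 1)}
    (hW : bw M v k₀ = W M v) (hβ : (M k₀).2 = minBeta M v) (Y : ℝ) :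
    welfareShortfall M Y v = ∑ k, (welfare M v k₀ - welfare M v k) * softmax Y (bw M v) k := by
  simp only [welfareShortfall, sub_mul, sum_sub_distrib, ← mul_sum, sum_softmax, mul_one,
    ← hW, ← hβ, bw, welfare]
  ring

lemma dotp_mem_Icc {v x : Fin n → ℝ} (hv : (∀ j, 0 ≤ v j ∧ v j ≤ 1) ∧ ∑ j, v j ≤ 1)
    (hx : ∀ j, 0 ≤ x j ∧ x j ≤ 1) : 0 ≤ dotp v x ∧ dotp v x ≤ 1 :=
  ⟨sum_nonneg fun j _ => mul_nonneg (hv.1 j).1 (hx j).1,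
    (sum_le_sum fun j _ => mul_le_of_le_one_right (hv.1 j).1 (hx j).2).trans hv.2⟩

lemma welfare_nonneg {M : Menu m n K} (hM : IsMenu M) {v : Fin m → Fin n → ℝ}
    (hv : v ∈ VP m n) (k : Fin (K + 1)) : 0 ≤ welfare M v k :=
  sum_nonneg fun i _ => (dotp_mem_Icc (hv i) (hM.1 k i)).1

lemma welfare_le {M : Menu m n K} (hM : IsMenu M) {v : Fin m → Fin n → ℝ}
    (hv : v ∈ VP m n) (k : Fin (K + 1)) : welfare M v k ≤ n := by
  calc welfare M v k = ∑ j, ∑ i, v i j * (M k).1 i j := sum_comm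
    _ ≤ ∑ _j : Fin n, (1 : ℝ) := sum_le_sum fun j _ =>
        (sum_le_sum fun i _ => mul_le_of_le_one_left (hM.1 k i j).1 ((hv i).1 j).2).trans
          (hM.2.1 k j)
    _ = n := by simp

lemma abs_welfare_sub_le {M : Menu m n K} {v : Fin m → Fin n → ℝ} (hv : v ∈ VP m n)
    (k k' : Fin (K + 1)) :
    |welfare M v k - welfare M v k'| ≤ ∑ i, ∑ j, |(M k).1 i j - (M k').1 i j| := by
  simp only [welfare, dotp, ← sum_sub_distrib, ← mul_sub]
  refine (abs_sum_le_sum_abs _ _).trans (sum_le_sum fun i _ => ?_)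
  refine (abs_sum_le_sum_abs _ _).trans (sum_le_sum fun j _ => ?_)
  rw [abs_mul, abs_of_nonneg ((hv i).1 j).1]
  exact mul_le_of_le_one_left (abs_nonneg _) ((hv i).1 j).2

lemma abs_welfareShortfall_le {M : Menu m n K} (hM : IsMenu M) {Y : ℝ} (hY : 0 ≤ Y)
    {v : Fin m → Fin n → ℝ} (hv : v ∈ VP m n) :
    |welfareShortfall M Y v| ≤ n * K / (K + 1) := by
  obtain ⟨k₀, hW, hβ⟩ := exists_bw_eq_W_and_eq_minBeta M v
  have hσ := inv_card_le_softmax (c := bw M v) hY fun k => (le_sup' _ (mem_univ k)).trans_eq hW.symm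
  rw [Fintype.card_fin, Nat.cast_add, Nat.cast_one] at hσ
  rw [welfareShortfall_eq hW hβ]
  calc _ ≤ ∑ k, |(welfare M v k₀ - welfare M v k) * softmax Y (bw M v) k| :=
        abs_sum_le_sum_abs _ _
    _ = ∑ k ∈ univ.erase k₀, |(welfare M v k₀ - welfare M v k) * softmax Y (bw M v) k| := by
        rw [← add_sum_erase _ _ (mem_univ k₀), sub_self, zero_mul, abs_zero, zero_add]
    _ ≤ ∑ k ∈ univ.erase k₀, n * softmax Y (bw M v) k := sum_le_sum fun k _ => by
        rw [abs_mul, abs_of_nonneg (softmax_nonneg _ _ _)]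
        refine mul_le_mul_of_nonneg_right (abs_sub_le_iff.2 ⟨?_, ?_⟩) (softmax_nonneg _ _ _)
        · linarith [welfare_le hM hv k₀, welfare_nonneg hM hv k]
        · linarith [welfare_le hM hv k, welfare_nonneg hM hv k₀]
    _ = n * (1 - softmax Y (bw M v) k₀) := by
        rw [← mul_sum, sum_erase_eq_sub (mem_univ _), sum_softmax]
    _ ≤ n * K / (K + 1) := by
        rw [mul_div_assoc]
        refine mul_le_mul_of_nonneg_left ?_ (Nat.cast_nonneg n)
        rw [le_div_iff₀ (by positivity)]
        rw [inv_le_iff_one_le_mul₀ (by positivity)] at hσ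
        nlinarith

noncomputable def activeSpread (M : Menu m n K) (v : Fin m → Fin n → ℝ) (k : Fin (K + 1))
    (i : Fin m) (j : Fin n) : ℝ :=
  univ.sup' univ_nonempty fun k' => if bw M v k' = W M v then |(M k').1 i j - (M k).1 i j| else 0

noncomputable def spreadTerm (M : Menu m n K) (Y : ℝ) (k : Fin (K + 1)) (i : Fin m) (j : Fin n)
    (v : Fin m → Fin n → ℝ) : ℝ :=
  activeSpread M v k i j * Real.exp (-(Y * (W M v - bw M v k)))

lemma spreadTerm_nonneg (M : Menu m n K) (Y : ℝ) (k : Fin (K + 1)) (i : Fin m) (j : Fin n)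
    (v : Fin m → Fin n → ℝ) : 0 ≤ spreadTerm M Y k i j v := by
  obtain ⟨k₀, hk₀, -⟩ := exists_bw_eq_W_and_eq_minBeta M v
  refine mul_nonneg (le_sup'_of_le _ (mem_univ k₀) ?_) (Real.exp_pos _).le
  rw [if_pos hk₀]
  exact abs_nonneg _

lemma abs_welfareShortfall_le_sum_spreadTerm (M : Menu m n K) (Y : ℝ)
    {v : Fin m → Fin n → ℝ} (hv : v ∈ VP m n) :
    |welfareShortfall M Y v| ≤
      ∑ p : Fin (K + 1) × Fin m × Fin n, spreadTerm M Y p.1 p.2.1 p.2.2 v := by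
  obtain ⟨k₀, hW, hβ⟩ := exists_bw_eq_W_and_eq_minBeta M v
  simp only [welfareShortfall_eq hW hβ, Fintype.sum_prod_type]
  refine (abs_sum_le_sum_abs _ _).trans (sum_le_sum fun k _ => ?_)
  simp only [spreadTerm, ← sum_mul, abs_mul, abs_of_nonneg (softmax_nonneg _ _ _)]
  refine mul_le_mul ((abs_welfare_sub_le hv k₀ k).trans (sum_le_sum fun i _ => sum_le_sum
    fun j _ => le_sup'_of_le _ (mem_univ k₀) (by rw [if_pos hW])))
    (softmax_le_exp_neg Y (bw M v) k) (softmax_nonneg _ _ _) ?_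
  exact sum_nonneg fun i _ => sum_nonneg fun j _ =>
    le_sup'_of_le _ (mem_univ k₀) (by rw [if_pos hW]; exact abs_nonneg _)

end Shortfall

section Bounds

variable {m n K : ℕ}

lemma abs_softmaxPay_sub_pay_le (M : Menu m n K) {Y : ℝ} (hY : 0 < Y) (v : Fin m → Fin n → ℝ) :
    |softmaxPay M Y v - pay M v| ≤ m * K / (Real.exp 1 * Y) + |welfareShortfall M Y v| := by
  have hr : ∀ c : Fin (K + 1) → ℝ, softmaxRegret Y c ≤ K / (Real.exp 1 * Y) := fun c => by
    simpa using softmaxRegret_le hY c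
  have hm : (0 : ℝ) ≤ m := Nat.cast_nonneg m
  have hregret : |m * softmaxRegret Y (bw M v) - ∑ i, softmaxRegret Y (bwWo M v i)| ≤
      m * (K / (Real.exp 1 * Y)) :=
    abs_sub_le_of_nonneg_of_le (mul_nonneg hm (softmaxRegret_nonneg _ _))
      (mul_le_mul_of_nonneg_left (hr _) hm) (sum_nonneg fun i _ => softmaxRegret_nonneg _ _)
      ((sum_le_sum fun i _ => hr _).trans_eq (by simp))
  rw [softmaxPay_sub_pay, mul_div_assoc]
  exact (abs_sub _ _).trans (by linarith)

lemma abs_pay_le {M : Menu m n K} (hM : IsMenu M) {v : Fin m → Fin n → ℝ} (hv : v ∈ VP m n) :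
    |pay M v| ≤ m + n := by
  obtain ⟨k₀, hW, hβ⟩ := exists_bw_eq_W_and_eq_minBeta M v
  have hWWo : ∀ i, W M v - 1 ≤ WWo M v i ∧ WWo M v i ≤ W M v := fun i =>
    ⟨le_sup'_of_le _ (mem_univ k₀) (by
        rw [bwWo_eq, hW]; linarith [(dotp_mem_Icc (hv i) (hM.1 k₀ i)).2]),
      sup'_le _ _ fun k _ => by
        have hk : bw M v k ≤ W M v := le_sup' _ (mem_univ k)
        rw [bwWo_eq]
        linarith [(dotp_mem_Icc (hv i) (hM.1 k i)).1]⟩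
  have hpay : pay M v = ∑ i, (WWo M v i - W M v) + welfare M v k₀ := by
    rw [pay, sum_sub_distrib, sum_const, card_univ, Fintype.card_fin, nsmul_eq_mul, ← hβ, ← hW]
    simp only [bw, welfare]
    ring
  have hsum_le : ∑ i, (WWo M v i - W M v) ≤ 0 :=
    sum_nonpos fun i _ => sub_nonpos.2 (hWWo i).2
  have hsum_ge : -(m : ℝ) ≤ ∑ i, (WWo M v i - W M v) := by
    have := sum_le_sum fun i (_ : i ∈ univ) => (hWWo i).1
    simp only [sum_const, card_univ, Fintype.card_fin, nsmul_eq_mul, mul_sub, mul_one] at this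
    rw [sum_sub_distrib, sum_const, card_univ, Fintype.card_fin, nsmul_eq_mul]
    linarith
  rw [hpay, abs_le]
  constructor <;> linarith [welfare_nonneg hM hv k₀, welfare_le hM hv k₀]

end Bounds

section Measurability

variable {m n K : ℕ}

lemma measurable_bw (M : Menu m n K) (k : Fin (K + 1)) : Measurable fun v => bw M v k := by
  unfold bw dotp; fun_prop

lemma measurable_bwWo (M : Menu m n K) (i : Fin m) (k : Fin (K + 1)) :
    Measurable fun v => bwWo M v i k := by
  unfold bwWo dotp; fun_prop

lemma measurableSet_VP : MeasurableSet (VP m n) := by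
  unfold VP; measurability

lemma measurable_W (M : Menu m n K) : Measurable (W M) :=
  measurable_finset_sup' univ_nonempty fun k _ => measurable_bw M k

lemma measurable_WWo (M : Menu m n K) (i : Fin m) : Measurable fun v => WWo M v i :=
  measurable_finset_sup' univ_nonempty fun k _ => measurable_bwWo M i k

lemma minBeta_eq_inf' (M : Menu m n K) (v : Fin m → Fin n → ℝ) :
    minBeta M v = univ.inf' univ_nonempty fun k =>
      if bw M v k = W M v then (M k).2 else univ.sup' univ_nonempty fun k => (M k).2 := by
  obtain ⟨k₀, hW, hβ⟩ := exists_bw_eq_W_and_eq_minBeta M v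
  refine le_antisymm (le_inf' _ _ fun k _ => ?_)
    (inf'_le_of_le _ (mem_univ k₀) (by rw [if_pos hW, hβ]))
  split_ifs with h
  · exact minBeta_le h
  · exact hβ ▸ le_sup' (fun k => (M k).2) (mem_univ k₀)

lemma measurable_minBeta (M : Menu m n K) : Measurable (minBeta M) := by
  rw [funext (minBeta_eq_inf' M)]
  exact measurable_finset_inf' univ_nonempty fun k _ => Measurable.ite
    (measurableSet_eq_fun (measurable_bw M k) (measurable_W M)) measurable_const measurable_const

lemma measurable_pay (M : Menu m n K) : Measurable (pay M) :=
  ((Finset.measurable_sum _ fun i _ => measurable_WWo M i).sub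
    ((measurable_W M).const_mul _)).sub (measurable_minBeta M)

lemma measurable_softmaxPay (M : Menu m n K) (Y : ℝ) : Measurable (softmaxPay M Y) := by
  have := measurable_bw M
  have := measurable_bwWo M
  unfold softmaxPay
  fun_prop

lemma measurable_activeSpread (M : Menu m n K) (k : Fin (K + 1)) (i : Fin m) (j : Fin n) :
    Measurable fun v => activeSpread M v k i j :=
  measurable_finset_sup' univ_nonempty fun k' _ => Measurable.ite
    (measurableSet_eq_fun (measurable_bw M k') (measurable_W M)) measurable_const measurable_const

lemma measurable_spreadTerm (M : Menu m n K) (Y : ℝ) (k : Fin (K + 1)) (i : Fin m) (j : Fin n) :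
    Measurable (spreadTerm M Y k i j) :=
  (measurable_activeSpread M k i j).mul
    (((measurable_W M).sub (measurable_bw M k)).const_mul Y).neg.exp

end Measurability

section Slicing

variable {m n K : ℕ}

lemma bw_update_update (M : Menu m n K) (x : Fin m → Fin n → ℝ) (i₀ : Fin m) (j₀ : Fin n)
    (z : Fin n → ℝ) (s : ℝ) (k : Fin (K + 1)) :
    bw M (Function.update x i₀ (Function.update z j₀ s)) k =
      (M k).1 i₀ j₀ * s + bw M (Function.update x i₀ (Function.update z j₀ 0)) k := by
  have hout := sum_apply_update (fun l w => dotp w ((M k).1 l)) x i₀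
  have hin := sum_apply_update (fun j t => t * (M k).1 i₀ j) z j₀
  rw [bw, bw, hout, hout]
  unfold dotp
  rw [hin, hin]
  ring

lemma W_update_update (M : Menu m n K) (x : Fin m → Fin n → ℝ) (i₀ : Fin m) (j₀ : Fin n)
    (z : Fin n → ℝ) (s : ℝ) :
    W M (Function.update x i₀ (Function.update z j₀ s)) =
      upperEnvelope (fun k => (M k).1 i₀ j₀)
        (fun k => bw M (Function.update x i₀ (Function.update z j₀ 0)) k) s :=
  sup'_congr _ rfl fun k _ => bw_update_update M x i₀ j₀ z s k

lemma spreadTerm_update_update (M : Menu m n K) (Y : ℝ) (k : Fin (K + 1)) (x : Fin m → Fin n → ℝ)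
    (i₀ : Fin m) (j₀ : Fin n) (z : Fin n → ℝ) (s : ℝ) :
    spreadTerm M Y k i₀ j₀ (Function.update x i₀ (Function.update z j₀ s)) =
      activeSlopeGap (fun k => (M k).1 i₀ j₀)
          (fun k => bw M (Function.update x i₀ (Function.update z j₀ 0)) k) k s *
        envelopeWeight (fun k => (M k).1 i₀ j₀)
          (fun k => bw M (Function.update x i₀ (Function.update z j₀ 0)) k) k Y s := by
  simp only [spreadTerm, activeSpread, activeSlopeGap, envelopeWeight,
    W_update_update M x i₀ j₀ z s, bw_update_update M x i₀ j₀ z s]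

def unitBox (m n : ℕ) : Set (Fin m → Fin n → ℝ) :=
  Set.univ.pi fun _ => Set.univ.pi fun _ => Set.Icc 0 1

lemma VP_subset_unitBox : VP m n ⊆ unitBox m n := fun _ hv =>
  Set.mem_univ_pi.2 fun i => Set.mem_univ_pi.2 fun j => (hv i).1 j

lemma lintegral_indicator_spreadTerm_update_update_le (M : Menu m n K) {Y : ℝ} (hY : 0 < Y)
    (k : Fin (K + 1)) (i₀ : Fin m) (j₀ : Fin n) (x : Fin m → Fin n → ℝ) (z : Fin n → ℝ) :
    ∫⁻ s, (unitBox m n).indicator (fun v => ENNReal.ofReal (spreadTerm M Y k i₀ j₀ v))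
      (Function.update x i₀ (Function.update z j₀ s)) ≤ ENNReal.ofReal (2 / Y) := by
  calc _ ≤ ∫⁻ s in Set.Icc 0 1, ENNReal.ofReal
        (spreadTerm M Y k i₀ j₀ (Function.update x i₀ (Function.update z j₀ s))) := by
        rw [← lintegral_indicator measurableSet_Icc]
        refine lintegral_mono fun s => ?_
        by_cases hs : s ∈ Set.Icc (0 : ℝ) 1
        · rw [Set.indicator_of_mem hs]
          exact Set.indicator_le_self _ _ _
        · have hnot : Function.update x i₀ (Function.update z j₀ s) ∉ unitBox m n := fun h =>
            hs (by simp only [unitBox, Set.mem_univ_pi] at h; simpa using h i₀ j₀)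
          rw [Set.indicator_of_notMem hnot]
          exact zero_le
    _ ≤ ENNReal.ofReal (2 / Y) := by
        simp only [spreadTerm_update_update]
        exact setLIntegral_activeSlopeGap_mul_envelopeWeight_le _ hY zero_le_one

lemma lintegral_indicator_spreadTerm_le (M : Menu m n K) {Y : ℝ} (hY : 0 < Y)
    (k : Fin (K + 1)) (i₀ : Fin m) (j₀ : Fin n) :
    ∫⁻ v, (unitBox m n).indicator (fun v => ENNReal.ofReal (spreadTerm M Y k i₀ j₀ v)) v
      ≤ ENNReal.ofReal (2 / Y) := by
  have hbox : MeasurableSet (unitBox m n) :=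
    MeasurableSet.univ_pi fun _ => MeasurableSet.univ_pi fun _ => measurableSet_Icc
  have hmeas := ((measurable_spreadTerm M Y k i₀ j₀).ennreal_ofReal).indicator hbox
  have hcube : volume (Set.univ.pi fun _ : Fin n => Set.Icc (0 : ℝ) 1) = 1 := by
    rw [volume_pi, Measure.pi_pi]
    simp [Real.volume_Icc]
  rw [volume_pi]
  refine lintegral_pi_le_of_lintegral_update_le
    (fun _ => MeasurableSet.univ_pi fun _ => measurableSet_Icc) (fun _ => hcube) hmeas
    Set.support_indicator_subset i₀ fun x => ?_
  rw [volume_pi]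
  refine lintegral_pi_le_of_lintegral_update_le (S := fun _ => Set.Icc 0 1)
    (fun _ => measurableSet_Icc) (fun _ => by simp [Real.volume_Icc])
    (hmeas.comp (measurable_update x)) (fun w hw => ?_) j₀ fun z => ?_
  · simpa using Set.mem_univ_pi.1 (Set.support_indicator_subset hw) i₀
  · simpa only [Function.comp_apply] using
      lintegral_indicator_spreadTerm_update_update_le M hY k i₀ j₀ x z

end Slicing

section Revenue

variable {m n K : ℕ} {F : Measure (Fin m → Fin n → ℝ)} [IsProbabilityMeasure F]

lemma ae_mem_VP (hFV : F (VP m n) = 1) : ∀ᵐ v ∂F, v ∈ VP m n :=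
  ae_iff.2 ((prob_compl_eq_zero_iff measurableSet_VP).2 hFV)

lemma revSoftmax_sub_rev_eq {M : Menu m n K} (hM : IsMenu M) {Y : ℝ} (hY : 0 < Y)
    (hFV : F (VP m n) = 1) :
    RevSoftmax F Y M - Rev F M = ∫ v, (softmaxPay M Y v - pay M v) ∂F := by
  have hpay : Integrable (pay M) F :=
    .of_bound (measurable_pay M).aestronglyMeasurable (m + n)
      ((ae_mem_VP hFV).mono fun v hv => abs_pay_le hM hv)
  have hsoftmax : Integrable (softmaxPay M Y) F :=
    .of_bound (measurable_softmaxPay M Y).aestronglyMeasurable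
      (m * K / (Real.exp 1 * Y) + n * K / (K + 1) + (m + n))
      ((ae_mem_VP hFV).mono fun v hv => by
        have := abs_sub_abs_le_abs_sub (softmaxPay M Y v) (pay M v)
        have := abs_softmaxPay_sub_pay_le M hY v
        have := abs_welfareShortfall_le hM hY.le hv
        have := abs_pay_le hM hv
        rw [Real.norm_eq_abs]
        linarith)
  exact (integral_sub hsoftmax hpay).symm

theorem abs_revSoftmax_sub_rev_le {M : Menu m n K} (hM : IsMenu M) {Y : ℝ} (hY : 0 < Y)
    (hFV : F (VP m n) = 1) :
    |RevSoftmax F Y M - Rev F M| ≤ m * K / (Real.exp 1 * Y) + n * K / (K + 1) := by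
  rw [revSoftmax_sub_rev_eq hM hY hFV, ← Real.norm_eq_abs]
  refine (norm_integral_le_of_norm_le_const (C := m * K / (Real.exp 1 * Y) + n * K / (K + 1))
    ((ae_mem_VP hFV).mono fun v hv => ?_)).trans_eq (by simp)
  rw [Real.norm_eq_abs]
  linarith [abs_softmaxPay_sub_pay_le M hY v, abs_welfareShortfall_le hM hY.le hv]

lemma ofReal_abs_softmaxPay_sub_pay_le (M : Menu m n K) {Y : ℝ} (hY : 0 < Y)
    {v : Fin m → Fin n → ℝ} (hv : v ∈ VP m n) :
    ENNReal.ofReal |softmaxPay M Y v - pay M v| ≤ ENNReal.ofReal (m * K / (Real.exp 1 * Y)) +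
      ∑ p : Fin (K + 1) × Fin m × Fin n, (unitBox m n).indicator
        (fun v => ENNReal.ofReal (spreadTerm M Y p.1 p.2.1 p.2.2 v)) v := by
  simp only [Set.indicator_of_mem (VP_subset_unitBox hv)]
  rw [← ENNReal.ofReal_sum_of_nonneg fun p _ => spreadTerm_nonneg M Y _ _ _ v]
  refine (ENNReal.ofReal_le_ofReal ?_).trans ENNReal.ofReal_add_le
  linarith [abs_softmaxPay_sub_pay_le M hY v, abs_welfareShortfall_le_sum_spreadTerm M Y hv]

lemma lintegral_abs_softmaxPay_sub_pay_le_of_density_le (M : Menu m n K) {Y : ℝ} (hY : 0 < Y)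
    (hFV : F (VP m n) = 1) {f : (Fin m → Fin n → ℝ) → ℝ} {X : ℝ} (hX : 0 ≤ X)
    (hfX : ∀ v, f v ≤ X) (hF : F = volume.withDensity fun v => ENNReal.ofReal (f v)) :
    ∫⁻ v, ENNReal.ofReal |softmaxPay M Y v - pay M v| ∂F ≤
      ENNReal.ofReal (m * K / (Real.exp 1 * Y) + (K + 1) * m * n * (X * (2 / Y))) := by
  set φ : Fin (K + 1) × Fin m × Fin n → (Fin m → Fin n → ℝ) → ℝ≥0∞ := fun p =>
    (unitBox m n).indicator fun v => ENNReal.ofReal (spreadTerm M Y p.1 p.2.1 p.2.2 v)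
  have hφ : ∀ p, Measurable (φ p) := fun p =>
    (measurable_spreadTerm M Y _ _ _).ennreal_ofReal.indicator
      (MeasurableSet.univ_pi fun _ => MeasurableSet.univ_pi fun _ => measurableSet_Icc)
  have hφF : ∀ p, ∫⁻ v, φ p v ∂F ≤ ENNReal.ofReal (X * (2 / Y)) := fun p => by
    rw [hF, ENNReal.ofReal_mul hX]
    exact (lintegral_withDensity_ofReal_le hfX _).trans
      (by gcongr; exact lintegral_indicator_spreadTerm_le M hY _ _ _)
  calc _ ≤ ∫⁻ v, (ENNReal.ofReal (m * K / (Real.exp 1 * Y)) + ∑ p, φ p v) ∂F :=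
        lintegral_mono_ae ((ae_mem_VP hFV).mono fun v hv =>
          ofReal_abs_softmaxPay_sub_pay_le M hY hv)
    _ = ENNReal.ofReal (m * K / (Real.exp 1 * Y)) + ∑ p, ∫⁻ v, φ p v ∂F := by
        rw [lintegral_add_left measurable_const, lintegral_const, measure_univ, mul_one,
          lintegral_finsetSum _ fun p _ => hφ p]
    _ ≤ ENNReal.ofReal (m * K / (Real.exp 1 * Y)) +
          ∑ _p : Fin (K + 1) × Fin m × Fin n, ENNReal.ofReal (X * (2 / Y)) := by
        gcongr with p
        exact hφF p
    _ = _ := by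
        rw [sum_const, card_univ, nsmul_eq_mul, ← ENNReal.ofReal_natCast, ← ENNReal.ofReal_mul
          (Nat.cast_nonneg _), ← ENNReal.ofReal_add (by positivity) (by positivity)]
        simp [Fintype.card_prod, mul_assoc]

theorem abs_revSoftmax_sub_rev_le_of_density_le {M : Menu m n K} (hM : IsMenu M) {Y : ℝ}
    (hY : 0 < Y) (hFV : F (VP m n) = 1) {f : (Fin m → Fin n → ℝ) → ℝ} {X : ℝ} (hX : 0 ≤ X)
    (hfX : ∀ v, f v ≤ X) (hF : F = volume.withDensity fun v => ENNReal.ofReal (f v)) :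
    |RevSoftmax F Y M - Rev F M| ≤
      m * K / (Real.exp 1 * Y) + (K + 1) * m * n * (X * (2 / Y)) := by
  rw [revSoftmax_sub_rev_eq hM hY hFV]
  refine abs_integral_le_integral_abs.trans ?_
  rw [integral_eq_lintegral_of_nonneg_ae (f := fun v => |softmaxPay M Y v - pay M v|)
    (ae_of_all _ fun v => abs_nonneg _)
    ((measurable_softmaxPay M Y).sub (measurable_pay M)).abs.aestronglyMeasurable]
  exact ENNReal.toReal_le_of_le_ofReal (by positivity)
    (lintegral_abs_softmaxPay_sub_pay_le_of_density_le M hY hFV hX hfX hF)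

end Revenue

theorem statement19_general {m n K : ℕ} (hm : 0 < m) (X Y : ℝ) (hX : 0 < X) (hY : max 1 X ≤ Y)
    (f : (Fin m → Fin n → ℝ) → ℝ) (hfX : ∀ v, f v ≤ X)
    (F : Measure (Fin m → Fin n → ℝ)) [IsProbabilityMeasure F]
    (hF : F = volume.withDensity fun v => ENNReal.ofReal (f v))
    (hFV : F (VP m n) = 1)
    (M : Menu m n K) (hM : IsMenu M) :
    |RevSoftmax F Y M - Rev F M| ≤
      (m : ℝ) * (K + 1) / (Real.exp 1 * Y) +
        ((n : ℝ) * (m : ℝ) * X * (K + 1) / Y) * (1 + Real.log (Y / X)) := by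
  have hXY : X ≤ Y := (le_max_right _ _).trans hY
  have hY0 : 0 < Y := hX.trans_le hXY
  have hregret : (m : ℝ) * K / (Real.exp 1 * Y) ≤ m * (K + 1) / (Real.exp 1 * Y) := by
    gcongr
    linarith
  calc |RevSoftmax F Y M - Rev F M|
      ≤ m * K / (Real.exp 1 * Y) +
          min ((n : ℝ) * K / (K + 1)) ((K + 1) * m * n * (X * (2 / Y))) := by
        rw [add_min]
        exact le_min (abs_revSoftmax_sub_rev_le hM hY0 hFV)
          (abs_revSoftmax_sub_rev_le_of_density_le hM hY0 hFV hX.le hfX hF)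
    _ ≤ _ := add_le_add hregret (min_le_mul_one_add_log hX hXY (Nat.cast_nonneg K)
          (Nat.one_le_cast.2 hm) (Nat.cast_nonneg n))

/-- If the valuation-profile distribution `F` has a density `f ≤ X`
(w.r.t. Lebesgue measure) and `Y ≥ max {1, X}`, then the softmax revenue of any AMA
menu differs from the (argmax) revenue by at most
`m (K+1) / (e Y) + (n m X (K+1) / Y) (1 + log (Y/X))`. -/
theorem statement19 {m n K : ℕ} (hm : 0 < m) (X Y : ℝ) (hX : 0 < X) (hY : max 1 X ≤ Y)
    (f : (Fin m → Fin n → ℝ) → ℝ) (hf0 : ∀ v, 0 ≤ f v) (hfX : ∀ v, f v ≤ X)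
    (F : Measure (Fin m → Fin n → ℝ)) [IsProbabilityMeasure F]
    (hF : F = volume.withDensity fun v => ENNReal.ofReal (f v))
    (hFV : F (VP m n) = 1)
    (M : Menu m n K) (hM : IsMenu M) :
    |RevSoftmax F Y M - Rev F M| ≤
      (m : ℝ) * (K + 1) / (Real.exp 1 * Y) +
        ((n : ℝ) * (m : ℝ) * X * (K + 1) / Y) * (1 + Real.log (Y / X)) :=
  statement19_general hm X Y hX hY f hfX F hF hFV M hM

end AMA
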